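/- arXiv:1901.10750 — 4 statements merged into one kernel-verified Lean document; each statement's English description precedes it below -/
import Mathlib

section
/- The i-th derivative of the resolvent map s ↦ (sE - A)^{-1} at a point σ where σE - A is invertible equals (-1)^i · i! · ((σE - A)^{-1}E)^i (σE - A)^{-1}. -/
open Matrix

attribute [local instance] Matrix.frobeniusNormedAddCommGroup Matrix.frobeniusNormedSpace
  Matrix.frobeniusNormedRing Matrix.frobeniusNormedAlgebra

/-!
In any normed algebra with summable geometric series, `t ↦ (tE - A)⁻¹` has derivative
`-(tE - A)⁻¹ E (tE - A)⁻¹` on the open set where `tE - A` is a unit. By the product rule,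
`t ↦ ((tE - A)⁻¹ E)^i (tE - A)⁻¹` then has derivative
`-(i + 1) ((tE - A)⁻¹ E)^(i+1) (tE - A)⁻¹`, which gives the formula by induction on `i`.
-/

section Resolvent

variable {𝕜 R : Type*} [NontriviallyNormedField 𝕜] [NormedRing R] [NormedAlgebra 𝕜 R]
  [HasSummableGeomSeries R] (E A : R)

open Filter Topology

theorem hasDerivAt_inverse_smul_sub {s : 𝕜} (hs : IsUnit (s • E - A)) :
    HasDerivAt (fun t : 𝕜 => Ring.inverse (t • E - A))
      (-(Ring.inverse (s • E - A) * E * Ring.inverse (s • E - A))) s := by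
  have hsmul_sub : HasDerivAt (fun t : 𝕜 => t • E - A) E s := by
    simpa using ((hasDerivAt_id s).smul_const E).sub_const A
  have := (hasFDerivAt_ringInverse (𝕜 := 𝕜) hs.unit).comp_hasDerivAt_of_eq s hsmul_sub hs.unit_spec
  simp only [← Ring.inverse_unit, hs.unit_spec] at this
  exact this

theorem eventually_isUnit_smul_sub {s : 𝕜} (hs : IsUnit (s • E - A)) :
    ∀ᶠ t in 𝓝 s, IsUnit (t • E - A) :=
  (Continuous.tendsto (by fun_prop) s).eventually (Units.isOpen.mem_nhds hs)

theorem hasDerivAt_inverse_mul_pow_mul_inverse (i : ℕ) {s : 𝕜} (hs : IsUnit (s • E - A)) :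
    HasDerivAt (fun t : 𝕜 => (Ring.inverse (t • E - A) * E) ^ i * Ring.inverse (t • E - A))
      (-(i + 1 : 𝕜) • ((Ring.inverse (s • E - A) * E) ^ (i + 1) * Ring.inverse (s • E - A))) s := by
  induction i with
  | zero => simpa [mul_assoc] using hasDerivAt_inverse_smul_sub E A hs
  | succ i ih =>
    have := ((hasDerivAt_inverse_smul_sub E A hs).mul_const E).mul ih
    convert this using 1
    · funext t
      rw [pow_succ', mul_assoc]
      rfl
    · simp only [pow_succ', mul_assoc, neg_mul, mul_smul_comm]
      match_scalars
      ring

theorem iteratedDeriv_inverse_smul_sub (i : ℕ) {s : 𝕜} (hs : IsUnit (s • E - A)) :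
    iteratedDeriv i (fun t : 𝕜 => Ring.inverse (t • E - A)) s =
      ((-1 : 𝕜) ^ i * i.factorial) •
        ((Ring.inverse (s • E - A) * E) ^ i * Ring.inverse (s • E - A)) := by
  induction i generalizing s with
  | zero => simp
  | succ i ih =>
    have hnear : iteratedDeriv i (fun t : 𝕜 => Ring.inverse (t • E - A)) =ᶠ[𝓝 s]
        fun t => ((-1 : 𝕜) ^ i * i.factorial) •
          ((Ring.inverse (t • E - A) * E) ^ i * Ring.inverse (t • E - A)) :=
      (eventually_isUnit_smul_sub E A hs).mono fun t ht => ih ht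
    have hderiv : HasDerivAt (fun t => ((-1 : 𝕜) ^ i * i.factorial) •
        ((Ring.inverse (t • E - A) * E) ^ i * Ring.inverse (t • E - A))) _ s :=
      (hasDerivAt_inverse_mul_pow_mul_inverse E A i hs).const_smul ((-1 : 𝕜) ^ i * i.factorial)
    rw [iteratedDeriv_succ, hnear.deriv_eq, hderiv.deriv, smul_smul]
    congr 1
    push_cast [Nat.factorial_succ, pow_succ]
    ring

end Resolvent

/-- The i-th derivative of the resolvent `s ↦ (sE - A)⁻¹` at `σ` equals
`(-1)^i i! ((σE-A)⁻¹ E)^i (σE-A)⁻¹`. -/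
theorem resolvent_iterated_deriv (n : ℕ) (E A : Matrix (Fin n) (Fin n) ℂ) (σ : ℂ)
    (hσ : IsUnit (σ • E - A)) (i : ℕ) :
    iteratedDeriv i (fun s : ℂ => (s • E - A)⁻¹) σ =
      ((-1 : ℂ) ^ i * (i.factorial : ℂ)) •
        (((σ • E - A)⁻¹ * E) ^ i * (σ • E - A)⁻¹) := by
  simpa only [nonsing_inv_eq_ringInverse] using iteratedDeriv_inverse_smul_sub E A i hσ
end

section
/- If V₀, …, V_{r-1} satisfy (σE - A)V₀ = B and (σE - A)Vᵢ = E·V_{i-1} for 1 ≤ i ≤ r-1, then the block matrix V = [V₀, …, V_{r-1}] satisfies the Sylvester equation E·V·S - A·V = B·R, where S is the r×r (block) Jordan-type matrix with σ on the diagonal and -1 on the first superdiagonal (blockwise -I_m), and R = [I_m, 0, …, 0]. -/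
open Matrix

/-!
Write `S = σ I - N`, where right multiplication by `N` moves block column `j` to block column
`j + 1`. Then `E V S - A V = (σE - A) V - E V N`, whose block column `j` is
`(σE - A) V_j - E V_{j-1}` for `j ≥ 1`, which vanishes by the recurrence, and `(σE - A) V_0 = B`
for `j = 0`: exactly the block columns of `B R = [B 0 ⋯ 0]`.
-/

namespace Matrix

variable {α l n κ : Type*} [Fintype n]

theorem mul_apply_of_blockRow [NonUnitalNonAssocSemiring α] {ι : Type*}
    {V : ι → Matrix n κ α} {Vb : Matrix n (ι × κ) α} (hVb : ∀ x i a, Vb x (i, a) = V i x a)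
    (M : Matrix l n α) (x : l) (i : ι) (a : κ) :
    (M * Vb) x (i, a) = (M * V i) x a := by
  simp only [mul_apply, hVb]

def blockShift (α : Type*) [Zero α] [One α] (r : ℕ) (κ : Type*) [DecidableEq κ] :
    Matrix (Fin r × κ) (Fin r × κ) α :=
  of fun p q => if (q.1 : ℕ) = p.1 + 1 ∧ p.2 = q.2 then 1 else 0

variable {r : ℕ}

theorem eq_smul_one_sub_blockShift [Ring α] [DecidableEq κ] {σ : α}
    {S : Matrix (Fin r × κ) (Fin r × κ) α}
    (hS : ∀ i a j b, S (i, a) (j, b) =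
      if i = j ∧ a = b then σ else if (j : ℕ) = (i : ℕ) + 1 ∧ a = b then -1 else 0) :
    S = σ • 1 - blockShift α r κ := by
  ext ⟨i, a⟩ ⟨j, b⟩
  by_cases hij : i = j
  · subst hij
    simp [hS, blockShift, one_apply]
  · have hne : (i, a) ≠ (j, b) := fun h => hij (Prod.ext_iff.1 h).1
    simp [hS, blockShift, hij, hne, neg_ite]

variable [NonAssocSemiring α]

theorem mul_blockShift_apply_zero [Fintype κ] [DecidableEq κ] (W : Matrix l (Fin r × κ) α)
    (x : l) (h : 0 < r) (b : κ) : (W * blockShift α r κ) x (⟨0, h⟩, b) = 0 := by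
  simp [mul_apply, blockShift]

theorem mul_blockShift_apply_succ [Fintype κ] [DecidableEq κ] (W : Matrix l (Fin r × κ) α)
    (x : l) {k : ℕ} (h : k + 1 < r) (b : κ) :
    (W * blockShift α r κ) x (⟨k + 1, h⟩, b) = W x (⟨k, Nat.lt_of_succ_lt h⟩, b) := by
  rw [mul_apply, Fintype.sum_eq_single (⟨k, Nat.lt_of_succ_lt h⟩, b)]
  · simp [blockShift]
  · rintro ⟨i, a⟩ hne
    have : ¬((k : ℕ) = i ∧ a = b) := fun ⟨hi, ha⟩ => hne (by subst ha; ext <;> simp [hi])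
    simp [blockShift, this]

theorem mul_apply_of_firstBlockRow [DecidableEq n] {R : Matrix n (Fin r × n) α}
    (hR : ∀ a j b, R a (j, b) = if (j : ℕ) = 0 ∧ a = b then 1 else 0)
    (B : Matrix l n α) (x : l) (j : Fin r) (b : n) :
    (B * R) x (j, b) = if (j : ℕ) = 0 then B x b else 0 := by
  split_ifs with hj <;> simp [mul_apply, hR, hj]

end Matrix

/-- If `(σE - A)V₀ = B` and `(σE - A)Vᵢ = E V_{i-1}`, then the block matrix
`V = [V₀, …, V_{r-1}]` satisfies `E V S - A V = B R` with the modified block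
Jordan matrix `S` (diagonal `σ`, superdiagonal blocks `-I`) and `R = [I 0 ⋯ 0]`. -/
theorem block_moment_sylvester (n m r : ℕ) (E A : Matrix (Fin n) (Fin n) ℝ)
    (B : Matrix (Fin n) (Fin m) ℝ) (σ : ℝ)
    (V : Fin r → Matrix (Fin n) (Fin m) ℝ)
    (h0 : ∀ h : 0 < r, (σ • E - A) * V ⟨0, h⟩ = B)
    (hstep : ∀ (i : ℕ) (hi : i + 1 < r),
      (σ • E - A) * V ⟨i + 1, hi⟩ = E * V ⟨i, Nat.lt_of_succ_lt hi⟩)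
    (Vb : Matrix (Fin n) (Fin r × Fin m) ℝ)
    (hVb : ∀ x i j, Vb x (i, j) = V i x j)
    (S : Matrix (Fin r × Fin m) (Fin r × Fin m) ℝ)
    (hS : ∀ i a j b, S (i, a) (j, b) =
      if i = j ∧ a = b then σ
      else if (j : ℕ) = (i : ℕ) + 1 ∧ a = b then -1 else 0)
    (R : Matrix (Fin m) (Fin r × Fin m) ℝ)
    (hR : ∀ a j b, R a (j, b) = if (j : ℕ) = 0 ∧ a = b then 1 else 0) :
    E * Vb * S - A * Vb = B * R := by
  have hsplit : E * Vb * S - A * Vb = (σ • E - A) * Vb - E * Vb * blockShift ℝ r (Fin m) := by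
    rw [eq_smul_one_sub_blockShift hS, Matrix.mul_sub, Matrix.mul_smul, Matrix.mul_one,
      Matrix.sub_mul, Matrix.smul_mul]
    abel
  ext x ⟨⟨_ | k, hj⟩, b⟩ <;>
    rw [hsplit, Matrix.sub_apply, mul_apply_of_blockRow hVb, mul_apply_of_firstBlockRow hR]
  · simp [h0 hj, mul_blockShift_apply_zero]
  · simp [hstep k hj, mul_blockShift_apply_succ, mul_apply_of_blockRow hVb]
end

section
/- Suppose A·V - E·V·S_v + B·R = 0 and W ∈ ℂ^{n×r} with W^T E V invertible. Define the reduced system E_r = W^T E V, A_r = W^T A V, B_r = W^T B, C_r = C V. If the full system E ẋ = A x + B u, y = C x is initialized at x(0) = V x₀ and the reduced system E_r ẋ_r = A_r x_r + B_r u, y_r = C_r x_r is initialized at x_r(0) = x₀, and both are driven by u(t) = R e^{S_v t} x₀, then y(t) = y_r(t) for all t. (In fact x(t) = V x_r(t) with x_r(t) = e^{S_v t} x₀.) -/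
/-!
The Sylvester equation `A V - E V Sᵥ + B R = 0` says exactly that `V e^{t Sᵥ} x₀` solves
`E ẋ = A x + B u` for the input `u(t) = R e^{t Sᵥ} x₀`; multiplying it by `Wᵀ` shows that
`e^{t Sᵥ} x₀` solves the reduced system (the same statement with `V = 1`). As `E` and `WᵀEV`
are invertible, both systems are ODEs with Lipschitz right-hand sides, so uniqueness of
solutions gives `x(t) = V e^{t Sᵥ} x₀` and `x_r(t) = e^{t Sᵥ} x₀`.
-/

open Matrix

attribute [local instance] Matrix.linftyOpNormedRing Matrix.linftyOpNormedAlgebra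
attribute [local instance] Matrix.linftyOpNormedAddCommGroup Matrix.linftyOpNormedSpace

namespace Matrix

section Uniqueness

variable {𝕜 k l : Type*} [RCLike 𝕜] [Fintype k] [Fintype l]

theorem lipschitzWith_mulVec_add (M : Matrix k l 𝕜) (c : k → 𝕜) :
    LipschitzWith ‖M‖₊ (fun w => M *ᵥ w + c) :=
  LipschitzWith.of_dist_le_mul fun v w => by
    simpa only [dist_eq_norm, add_sub_add_right_eq_sub, ← mulVec_sub, coe_nnnorm] using
      linfty_opNorm_mulVec M (v - w)

theorem descriptor_ODE_solution_unique [DecidableEq k] {E A : Matrix k k 𝕜} (hE : IsUnit E)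
    {f : ℝ → k → 𝕜} {x x' y y' : ℝ → k → 𝕜}
    (hx : ∀ t, HasDerivAt x (x' t) t) (hxeq : ∀ t, E *ᵥ x' t = A *ᵥ x t + f t)
    (hy : ∀ t, HasDerivAt y (y' t) t) (hyeq : ∀ t, E *ᵥ y' t = A *ᵥ y t + f t)
    (h0 : x 0 = y 0) : x = y := by
  have hdet : IsUnit E.det := (isUnit_iff_isUnit_det E).mp hE
  have hsolve : ∀ {z z' : ℝ → k → 𝕜}, (∀ t, E *ᵥ z' t = A *ᵥ z t + f t) →
      ∀ t, z' t = (E⁻¹ * A) *ᵥ z t + E⁻¹ *ᵥ f t := fun hzeq t => by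
    rw [← mulVec_mulVec, ← mulVec_add, ← hzeq, mulVec_mulVec, nonsing_inv_mul _ hdet,
      one_mulVec]
  exact ODE_solution_unique_univ (s := fun _ => Set.univ)
    (fun t => (lipschitzWith_mulVec_add _ (E⁻¹ *ᵥ f t)).lipschitzOnWith)
    (fun t => ⟨hsolve hxeq t ▸ hx t, trivial⟩) (fun t => ⟨hsolve hyeq t ▸ hy t, trivial⟩) h0

end Uniqueness

section Sylvester

variable {k l q : Type*} [Fintype k] [DecidableEq k] [Fintype l] [DecidableEq l] [Fintype q]

theorem hasDerivAt_exp_smul_mulVec (S : Matrix l l ℂ) (x₀ : l → ℂ) (t : ℝ) :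
    HasDerivAt (fun s : ℝ => NormedSpace.exp ((s : ℂ) • S) *ᵥ x₀)
      (S *ᵥ (NormedSpace.exp ((t : ℂ) • S) *ᵥ x₀)) t := by
  have hexp : HasDerivAt (fun s : ℝ => NormedSpace.exp ((s : ℂ) • S))
      (S * NormedSpace.exp ((t : ℂ) • S)) t := by
    have h := (hasDerivAt_exp_smul_const' S (t : ℂ)).scomp t Complex.ofRealCLM.hasDerivAt
    simp only [Complex.ofRealCLM_apply, Complex.ofReal_one, one_smul] at h
    -- not `simpa`: `h` carries the normed topology on matrices, the goal the product one
    exact h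
  rw [mulVec_mulVec]
  exact ((mulVecBilin ℝ ℂ).flip x₀).toContinuousLinearMap.hasFDerivAt.comp_hasDerivAt t hexp

theorem eq_mulVec_exp_smul_mulVec_of_sylvester {E A : Matrix k k ℂ} (hE : IsUnit E)
    {V : Matrix k l ℂ} {S : Matrix l l ℂ} {B : Matrix k q ℂ} {R : Matrix q l ℂ}
    (hSyl : E * V * S = A * V + B * R) (x₀ : l → ℂ) {x x' : ℝ → k → ℂ}
    (hx : ∀ t, HasDerivAt x (x' t) t)
    (hxeq : ∀ t : ℝ, E *ᵥ x' t = A *ᵥ x t + B *ᵥ (R *ᵥ (NormedSpace.exp ((t : ℂ) • S) *ᵥ x₀)))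
    (hx0 : x 0 = V *ᵥ x₀) (t : ℝ) :
    x t = V *ᵥ (NormedSpace.exp ((t : ℂ) • S) *ᵥ x₀) := by
  set z : ℝ → l → ℂ := fun s => NormedSpace.exp ((s : ℂ) • S) *ᵥ x₀
  have hVz : ∀ s, HasDerivAt (fun s => V *ᵥ z s) (V *ᵥ (S *ᵥ z s)) s := fun s =>
    (mulVecBilin ℂ ℝ V).toContinuousLinearMap.hasFDerivAt.comp_hasDerivAt s
      (hasDerivAt_exp_smul_mulVec S x₀ s)
  have hVzeq : ∀ s, E *ᵥ (V *ᵥ (S *ᵥ z s)) = A *ᵥ (V *ᵥ z s) + B *ᵥ (R *ᵥ z s) := fun s => by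
    simp only [mulVec_mulVec, ← Matrix.mul_assoc, hSyl, add_mulVec]
  exact congrFun (descriptor_ODE_solution_unique hE hx hxeq hVz hVzeq (by simp [z, hx0])) t

end Sylvester

end Matrix

/-- Linear moment matching: if `A V - E V S_v + B R = 0` and `WᵀEV` is invertible, then
the full model started at `x(0) = V x₀` and the reduced model started at `x_r(0) = x₀`,
both driven by `u(t) = R e^{S_v t} x₀`, have identical outputs; in fact
`x(t) = V x_r(t)` with `x_r(t) = e^{S_v t} x₀`. -/
theorem linear_moment_matching_exact (n m p r : ℕ)
    (E A : Matrix (Fin n) (Fin n) ℂ) (hE : IsUnit E)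
    (B : Matrix (Fin n) (Fin m) ℂ) (C : Matrix (Fin p) (Fin n) ℂ)
    (V W : Matrix (Fin n) (Fin r) ℂ)
    (Sv : Matrix (Fin r) (Fin r) ℂ) (R : Matrix (Fin m) (Fin r) ℂ)
    (x₀ : Fin r → ℂ)
    (hSyl : A * V - E * V * Sv + B * R = 0)
    (hWEV : IsUnit (W.transpose * E * V))
    (u : ℝ → Fin m → ℂ)
    (hu : ∀ t : ℝ, u t = (R * NormedSpace.exp ((t : ℂ) • Sv)).mulVec x₀)
    (x x' : ℝ → Fin n → ℂ)
    (hx : ∀ t : ℝ, HasDerivAt x (x' t) t)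
    (hxeq : ∀ t : ℝ, E.mulVec (x' t) = A.mulVec (x t) + B.mulVec (u t))
    (hx0 : x 0 = V.mulVec x₀)
    (xr xr' : ℝ → Fin r → ℂ)
    (hxr : ∀ t : ℝ, HasDerivAt xr (xr' t) t)
    (hxreq : ∀ t : ℝ, (W.transpose * E * V).mulVec (xr' t) =
      (W.transpose * A * V).mulVec (xr t) + (W.transpose * B).mulVec (u t))
    (hxr0 : xr 0 = x₀) :
    ∀ t : ℝ, C.mulVec (x t) = (C * V).mulVec (xr t) ∧
      x t = V.mulVec (xr t) ∧
      xr t = (NormedSpace.exp ((t : ℂ) • Sv)).mulVec x₀ := by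
  intro t
  have hsyl : E * V * Sv = A * V + B * R := by
    rw [eq_comm, ← sub_eq_zero, ← hSyl]
    abel
  have hu' : ∀ s : ℝ, u s = R *ᵥ (NormedSpace.exp ((s : ℂ) • Sv) *ᵥ x₀) := fun s => by
    rw [hu, mulVec_mulVec]
  have hx_eq := eq_mulVec_exp_smul_mulVec_of_sylvester hE hsyl x₀ hx
    (fun s => hu' s ▸ hxeq s) hx0 t
  have hsyl_red : Wᵀ * E * V * 1 * Sv = Wᵀ * A * V * 1 + Wᵀ * B * R := by
    simp only [Matrix.mul_one, Matrix.mul_assoc, ← Matrix.mul_add, ← hsyl]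
  have hxr_eq := eq_mulVec_exp_smul_mulVec_of_sylvester hWEV hsyl_red x₀ hxr
    (fun s => hu' s ▸ hxreq s) (by rw [hxr0, one_mulVec]) t
  rw [one_mulVec] at hxr_eq
  exact ⟨by rw [hx_eq, hxr_eq, mulVec_mulVec], by rw [hx_eq, hxr_eq], hxr_eq⟩
end

section
/- Under the hypotheses of the Sylvester-like PDE for ν, if additionally ω : ℝ^n → ℝ^r is smooth with ω∘ν = id, then x_r(t) = x_r^v(t) solves the reduced system ẋ_r = (∂ω/∂x)|_{x=ν(x_r)} f(ν(x_r), u(t)) driven by u(t) = r(x_r^v(t)) with x_r(0) = x_r^v(0), and consequently the reduced output y_r(t) = h(ν(x_r(t))) equals h(ν(x_r^v(t))), i.e., the reduced model exactly matches the response h(ν(x_r^v(t))) of the interconnected full system initialized at x(0) = ν(x_r^v(0)). -/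
open scoped Manifold

private lemma tangent_section_contMDiff {E : Type*} [NormedAddCommGroup E]
    [NormedSpace ℝ E] (V : E → E) (hV : ContDiff ℝ (⊤ : ℕ∞) V) :
    ContMDiff 𝓘(ℝ, E) 𝓘(ℝ, E).tangent 1
      (fun x ↦ (⟨x, V x⟩ : TangentBundle 𝓘(ℝ, E) E)) := by
  intro x₀
  rw [Bundle.contMDiffAt_section (E := TangentSpace 𝓘(ℝ, E)) (s := V)]
  have h : ContMDiffAt 𝓘(ℝ, E) 𝓘(ℝ, E) 1 V x₀ := by
    rw [contMDiffAt_iff_contDiffAt]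
    exact (hV.contDiffAt).of_le (by simp)
  apply h.congr_of_eventuallyEq
  filter_upwards with x
  rw [TangentBundle.trivializationAt_apply]
  simp [Function.comp_def, chartAt_self_eq]

/-- Under the Sylvester-like PDE for `ν` and `ω ∘ ν = id`, the trajectory
`x_r = x_r^v` solves the reduced system
`ẋ_r = Dω|_{ν(x_r)} f(ν(x_r), u(t))` with `u(t) = r(x_r^v(t))`, and the reduced
output `h(ν(x_r(t)))` matches the output of the full system initialized at
`x(0) = ν(x_r^v(0))`. -/
theorem reduced_model_exact_matching (n m p r : ℕ)
    (f : (Fin n → ℝ) → (Fin m → ℝ) → (Fin n → ℝ))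
    (h : (Fin n → ℝ) → (Fin p → ℝ))
    (sv : (Fin r → ℝ) → (Fin r → ℝ)) (rmap : (Fin r → ℝ) → (Fin m → ℝ))
    (ν : (Fin r → ℝ) → (Fin n → ℝ)) (ω : (Fin n → ℝ) → (Fin r → ℝ))
    (hf : ContDiff ℝ (⊤ : ℕ∞) (fun q : (Fin n → ℝ) × (Fin m → ℝ) => f q.1 q.2))
    (hνs : ContDiff ℝ (⊤ : ℕ∞) ν) (hωs : ContDiff ℝ (⊤ : ℕ∞) ω)
    (hsvs : ContDiff ℝ (⊤ : ℕ∞) sv) (hrs : ContDiff ℝ (⊤ : ℕ∞) rmap)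
    (hPDE : ∀ xr, fderiv ℝ ν xr (sv xr) = f (ν xr) (rmap xr))
    (hid : ∀ xr, ω (ν xr) = xr)
    (xrv : ℝ → Fin r → ℝ)
    (hxrv : ∀ t : ℝ, HasDerivAt xrv (sv (xrv t)) t) :
    (∀ t : ℝ, HasDerivAt xrv
        (fderiv ℝ ω (ν (xrv t)) (f (ν (xrv t)) (rmap (xrv t)))) t) ∧
      (∀ x : ℝ → Fin n → ℝ,
        (∀ t : ℝ, HasDerivAt x (f (x t) (rmap (xrv t))) t) →
        x 0 = ν (xrv 0) →
        ∀ t : ℝ, h (ν (xrv t)) = h (x t)) := by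
  have key : ∀ xr, fderiv ℝ ω (ν xr) (f (ν xr) (rmap xr)) = sv xr := by
    intro xr
    have hν := hνs.differentiable (by simp) xr
    have hω := hωs.differentiable (by simp) (ν xr)
    have hcomp : fderiv ℝ (ω ∘ ν) xr = (fderiv ℝ ω (ν xr)).comp (fderiv ℝ ν xr) :=
      fderiv_comp xr hω hν
    have hidf : fderiv ℝ (ω ∘ ν) xr = ContinuousLinearMap.id ℝ _ := by
      have hone : (ω ∘ ν) = id := funext hid
      rw [hone, fderiv_id]
    calc fderiv ℝ ω (ν xr) (f (ν xr) (rmap xr))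
        = fderiv ℝ ω (ν xr) (fderiv ℝ ν xr (sv xr)) := by rw [hPDE]
      _ = fderiv ℝ (ω ∘ ν) xr (sv xr) := by rw [hcomp]; rfl
      _ = sv xr := by rw [hidf]; rfl
  constructor
  · intro t
    rw [key]
    exact hxrv t
  · intro x hx hx0 t
    -- augmented autonomous vector field on E = (Fin n → ℝ) × (Fin r → ℝ)
    set V : ((Fin n → ℝ) × (Fin r → ℝ)) → ((Fin n → ℝ) × (Fin r → ℝ)) :=
      fun q => (f q.1 (rmap q.2), sv q.2) with hVdef
    have hVs : ContDiff ℝ (⊤ : ℕ∞) V := by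
      apply ContDiff.prodMk
      · exact hf.comp (contDiff_fst.prodMk (hrs.comp contDiff_snd))
      · exact hsvs.comp contDiff_snd
    have hVm := tangent_section_contMDiff V hVs
    set γ : ℝ → (Fin n → ℝ) × (Fin r → ℝ) := fun t => (x t, xrv t) with hγdef
    set γ' : ℝ → (Fin n → ℝ) × (Fin r → ℝ) := fun t => (ν (xrv t), xrv t) with hγ'def
    have hγ : IsMIntegralCurve (I := 𝓘(ℝ, (Fin n → ℝ) × (Fin r → ℝ))) γ V := by
      intro t
      refine hasMFDerivAt_iff_hasFDerivAt.2 ?_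
      exact ((hx t).prodMk (hxrv t)).hasFDerivAt
    have hγ' : IsMIntegralCurve (I := 𝓘(ℝ, (Fin n → ℝ) × (Fin r → ℝ))) γ' V := by
      intro t
      refine hasMFDerivAt_iff_hasFDerivAt.2 ?_
      have hνx : HasDerivAt (fun s => ν (xrv s)) (f (ν (xrv t)) (rmap (xrv t))) t := by
        have := ((hνs.differentiable (by simp) (xrv t)).hasFDerivAt).comp_hasDerivAt t (hxrv t)
        rwa [hPDE] at this
      exact (hνx.prodMk (hxrv t)).hasFDerivAt
    have heq0 : γ 0 = γ' 0 := by
      simp only [hγdef, hγ'def, hx0]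
    have hgg : γ = γ' :=
      isMIntegralCurve_eq_of_contMDiff (t₀ := 0)
        (fun _ ↦ BoundarylessManifold.isInteriorPoint) hVm hγ hγ' heq0
    have hxt : x t = ν (xrv t) := congrArg Prod.fst (congrFun hgg t)
    rw [hxt]
end
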